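/- For each integer n ≥ 0, the function m_n(x) := h_n(x) exp(-x²/2) - g_n(x) ∫_x^∞ exp(-t²/2) dt is a solution of the ODE y'' + x y' - (2n+1) y = 0 on ℝ. -/

import Mathlib

open Nat Finset MeasureTheory Real

noncomputable def ff (t : ℝ) : ℝ := Real.exp (-t^2/2)
noncomputable def G (x : ℝ) : ℝ := ∫ t in Set.Ioi x, ff t

lemma ff_eq : ff = fun t => Real.exp (-(1/2) * t^2) := by
  funext t; simp [ff]; ring_nf

lemma ff_int : Integrable ff := by
  rw [ff_eq]; exact integrable_exp_neg_mul_sq (by norm_num)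

lemma ff_cont : Continuous ff := by
  rw [ff_eq]; continuity

lemma G_split (a b : ℝ) : G b = G a - ∫ t in a..b, ff t := by
  have key : ∀ u v : ℝ, u ≤ v → G u = (∫ t in Set.Ioc u v, ff t) + G v := by
    intro u v huv
    rw [G, G, ← setIntegral_union]
    · rw [Set.Ioc_union_Ioi_eq_Ioi huv]
    · exact Set.Ioc_disjoint_Ioi le_rfl
    · exact measurableSet_Ioi
    · exact ff_int.integrableOn
    · exact ff_int.integrableOn
  rcases le_total a b with h | h
  · rw [intervalIntegral.integral_of_le h, key a b h]; ring
  · rw [intervalIntegral.integral_symm, intervalIntegral.integral_of_le h, key b a h]; ring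

lemma G_hasDerivAt (x : ℝ) : HasDerivAt G (-(ff x)) x := by
  have : ∀ y, G y = G 0 - ∫ t in (0:ℝ)..y, ff t := fun y => G_split 0 y
  rw [funext this]
  have h : HasDerivAt (fun u => ∫ t in (0:ℝ)..u, ff t) (ff x) x :=
    intervalIntegral.integral_hasDerivAt_right
    (ff_int.intervalIntegrable)
    (ff_cont.stronglyMeasurable.stronglyMeasurableAtFilter)
    ff_cont.continuousAt
  exact (hasDerivAt_const x (G 0)).sub h |>.congr_deriv (by ring)

lemma ff_hasDerivAt (x : ℝ) : HasDerivAt ff (-x * ff x) x := by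
  have h1 : HasDerivAt (fun y : ℝ => -y^2/2) (-x) x := by
    have := ((hasDerivAt_pow 2 x).neg).div_const 2
    simpa using this.congr_deriv (by ring)
  exact ((Real.hasDerivAt_exp _).comp x h1).congr_deriv (by simp [ff]; ring)

noncomputable def gp (n : ℕ) (x : ℝ) : ℝ :=
  ∑ i ∈ Finset.range (n+1), ((2*n+1)! : ℝ) / ((2*(n-i))‼ * (2*i+1)!) * x^(2*i+1)

noncomputable def hp (n : ℕ) (x : ℝ) : ℝ :=
  ∑ i ∈ Finset.range (n+1), ((n+i)! * (n-i)! : ℝ) / ((2*(n-i))‼ * (2*i)!) *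
    (∑ j ∈ Finset.range (n-i+1), ((2*n+1).choose j : ℝ)) * x^(2*i)

noncomputable def acoef (n i : ℕ) : ℝ := ((2*n+1)! : ℝ) / ((2*(n-i))‼ * (2*i+1)!)
noncomputable def bcoef (n i : ℕ) : ℝ := ((n+i)! * (n-i)! : ℝ) / ((2*(n-i))‼ * (2*i)!) *
    (∑ j ∈ Finset.range (n-i+1), ((2*n+1).choose j : ℝ))

noncomputable def gp' (n : ℕ) (x : ℝ) : ℝ :=
  ∑ i ∈ Finset.range (n+1), acoef n i * (2*i+1) * x^(2*i)
noncomputable def gp'' (n : ℕ) (x : ℝ) : ℝ :=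
  ∑ i ∈ Finset.range n, acoef n (i+1) * (2*i+3) * (2*i+2) * x^(2*i+1)
noncomputable def hp' (n : ℕ) (x : ℝ) : ℝ :=
  ∑ i ∈ Finset.range n, bcoef n (i+1) * (2*i+2) * x^(2*i+1)
noncomputable def hp'' (n : ℕ) (x : ℝ) : ℝ :=
  ∑ i ∈ Finset.range n, bcoef n (i+1) * (2*i+2) * (2*i+1) * x^(2*i)

lemma gp_eq (n : ℕ) (x : ℝ) : gp n x = ∑ i ∈ Finset.range (n+1), acoef n i * x^(2*i+1) := rfl
lemma hp_eq (n : ℕ) (x : ℝ) : hp n x = ∑ i ∈ Finset.range (n+1), bcoef n i * x^(2*i) := rfl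

lemma gp_hasDerivAt (n : ℕ) (x : ℝ) : HasDerivAt (gp n) (gp' n x) x := by
  have h : HasDerivAt (gp n)
      (∑ i ∈ Finset.range (n+1), acoef n i * (((2*i+1):ℕ) * x^(2*i+1-1))) x := by
    unfold gp acoef
    exact HasDerivAt.fun_sum fun i _ => (hasDerivAt_pow _ x).const_mul _
  refine h.congr_deriv ?_
  refine Finset.sum_congr rfl fun i _ => ?_
  rw [show 2*i+1-1 = 2*i by omega]; push_cast; ring

lemma gp'_hasDerivAt (n : ℕ) (x : ℝ) : HasDerivAt (gp' n) (gp'' n x) x := by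
  have h : HasDerivAt (gp' n)
      (∑ i ∈ Finset.range (n+1), acoef n i * (2*i+1) * (((2*i):ℕ) * x^(2*i-1))) x := by
    unfold gp'
    exact HasDerivAt.fun_sum fun i _ => (hasDerivAt_pow _ x).const_mul _
  refine h.congr_deriv ?_
  rw [Finset.sum_range_succ']
  simp only [Nat.mul_zero, Nat.cast_zero, zero_mul, mul_zero, add_zero]
  unfold gp''
  refine Finset.sum_congr rfl fun i _ => ?_
  rw [show 2*(i+1)-1 = 2*i+1 by omega]; push_cast; ring

lemma hp_hasDerivAt (n : ℕ) (x : ℝ) : HasDerivAt (hp n) (hp' n x) x := by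
  have h : HasDerivAt (hp n)
      (∑ i ∈ Finset.range (n+1), bcoef n i * (((2*i):ℕ) * x^(2*i-1))) x := by
    unfold hp bcoef
    exact HasDerivAt.fun_sum fun i _ => (hasDerivAt_pow _ x).const_mul _
  refine h.congr_deriv ?_
  rw [Finset.sum_range_succ']
  simp only [Nat.mul_zero, Nat.cast_zero, zero_mul, mul_zero, add_zero]
  unfold hp'
  refine Finset.sum_congr rfl fun i _ => ?_
  rw [show 2*(i+1)-1 = 2*i+1 by omega]; push_cast; ring

lemma hp'_hasDerivAt (n : ℕ) (x : ℝ) : HasDerivAt (hp' n) (hp'' n x) x := by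
  have h : HasDerivAt (hp' n)
      (∑ i ∈ Finset.range n, bcoef n (i+1) * (2*i+2) * (((2*i+1):ℕ) * x^(2*i+1-1))) x := by
    unfold hp'
    exact HasDerivAt.fun_sum fun i _ => (hasDerivAt_pow _ x).const_mul _
  refine h.congr_deriv ?_
  unfold hp''
  refine Finset.sum_congr rfl fun i _ => ?_
  rw [show 2*i+1-1 = 2*i by omega]; push_cast; ring

lemma dfac_pos (k : ℕ) : (0:ℝ) < ((2*k)‼ : ℝ) := by
  exact_mod_cast Nat.doubleFactorial_pos _

lemma fac_pos' (k : ℕ) : (0:ℝ) < (k ! : ℝ) := by exact_mod_cast Nat.factorial_pos _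

lemma key1 (n i : ℕ) (hi : i < n) :
    acoef n (i+1) * (2*(i:ℝ)+3) * (2*(i:ℝ)+2) = (2*(n:ℝ) - 2*(i:ℝ)) * acoef n i := by
  obtain ⟨k, rfl⟩ : ∃ k, n = i + k + 1 := ⟨n - i - 1, by omega⟩
  unfold acoef
  rw [show (i+k+1)-(i+1) = k by omega, show (i+k+1)-i = k+1 by omega]
  have h2 : (2*(k+1))‼ = (2*k+2)*(2*k)‼ := by
    rw [show 2*(k+1) = 2*k+2 from rfl]; exact Nat.doubleFactorial_add_two _
  have hf : (2*(i+1)+1)! = (2*i+3)*((2*i+2)*(2*i+1)!) := by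
    rw [show 2*(i+1)+1 = (2*i+1)+1+1 by ring, Nat.factorial_succ, Nat.factorial_succ]
  rw [hf, h2]
  have d1 := dfac_pos k
  have d2 := fac_pos' (2*i+1)
  push_cast
  field_simp
  ring

lemma idI (n : ℕ) (x : ℝ) : gp'' n x + x * gp' n x - (2*(n:ℝ)+1) * gp n x = 0 := by
  have e1 : ∀ i ∈ Finset.range n, acoef n (i+1) * (2*(i:ℝ)+3) * (2*(i:ℝ)+2) * x^(2*i+1)
      = ((2*(n:ℝ)+1) * (acoef n i * x^(2*i+1)) - x * (acoef n i * (2*(i:ℝ)+1) * x^(2*i))) := by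
    intro i hi
    rw [key1 n i (Finset.mem_range.mp hi)]
    ring
  unfold gp''
  rw [Finset.sum_congr rfl e1, Finset.sum_sub_distrib, ← Finset.mul_sum, ← Finset.mul_sum]
  rw [gp_eq]; unfold gp'
  rw [Finset.sum_range_succ, Finset.sum_range_succ]
  ring

lemma an_one (n : ℕ) : acoef n n = 1 := by
  unfold acoef
  rw [Nat.sub_self, Nat.mul_zero]
  simp [Nat.doubleFactorial]
  exact Nat.factorial_ne_zero _

lemma bn_one (n : ℕ) : bcoef n n = 1 := by
  unfold bcoef
  rw [Nat.sub_self]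
  simp [Nat.doubleFactorial, show n + n = 2*n by ring]
  exact Nat.factorial_ne_zero _

lemma key2 (n i : ℕ) (hi : i < n) :
    bcoef n (i+1) * (2*(i:ℝ)+2) * (2*(i:ℝ)+1)
      = (2*(n:ℝ)+2*(i:ℝ)+2) * bcoef n i - 2*(2*(i:ℝ)+1) * acoef n i := by
  obtain ⟨k, rfl⟩ : ∃ k, n = i + k + 1 := ⟨n - i - 1, by omega⟩
  unfold bcoef acoef
  rw [show (i+k+1)-(i+1) = k by omega, show (i+k+1)-i = k+1 by omega,
      show (i+k+1)+(i+1) = 2*i+k+2 by omega, show (i+k+1)+i = 2*i+k+1 by omega]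
  set S := ∑ j ∈ Finset.range (k+1), ((2*(i+k+1)+1).choose j : ℝ) with hS
  have hsplit : ∑ j ∈ Finset.range (k+1+1), ((2*(i+k+1)+1).choose j : ℝ)
      = S + ((2*(i+k+1)+1).choose (k+1) : ℝ) := Finset.sum_range_succ _ _
  have hC : ((2*(i+k+1)+1).choose (k+1) : ℝ)
      = ((2*(i+k+1)+1)! : ℝ)/((k+1)! * (2*i+k+2)!) := by
    have h := Nat.choose_mul_factorial_mul_factorial (show k+1 ≤ 2*(i+k+1)+1 by omega)
    rw [show (2*(i+k+1)+1)-(k+1) = 2*i+k+2 by omega] at h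
    rw [eq_div_iff (by positivity)]
    have h' : (((2*(i+k+1)+1).choose (k+1) * (k+1)! * (2*i+k+2)! : ℕ) : ℝ)
        = ((2*(i+k+1)+1)! : ℝ) := by exact_mod_cast congrArg (Nat.cast : ℕ → ℝ) h
    push_cast at h'
    linear_combination h'
  rw [hsplit, hC]
  have hf1 : ((2*i+k+2)! : ℝ) = (2*↑i+↑k+2)*((2*i+k+1)! : ℝ) := by
    rw [show 2*i+k+2 = (2*i+k+1)+1 from rfl, Nat.factorial_succ]; push_cast; ring
  have hf2 : ((k+1)! : ℝ) = (↑k+1)*(k ! : ℝ) := by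
    rw [Nat.factorial_succ]; push_cast; ring
  have hf3 : ((2*(i+1))! : ℝ) = (2*↑i+2)*((2*↑i+1)*((2*i)! : ℝ)) := by
    rw [show 2*(i+1) = (2*i+1)+1 from rfl, Nat.factorial_succ, Nat.factorial_succ]
    push_cast; ring
  have hf4 : ((2*i+1)! : ℝ) = (2*↑i+1)*((2*i)! : ℝ) := by
    rw [Nat.factorial_succ]; push_cast; ring
  have hf5 : ((2*(i+k+1)+1)! : ℝ) = (2*↑i+2*↑k+3)*((2*i+2*k+2)! : ℝ) := by
    rw [show 2*(i+k+1)+1 = (2*i+2*k+2)+1 by ring, Nat.factorial_succ]; push_cast; ring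
  have hd : ((2*(k+1))‼ : ℝ) = (2*↑k+2)*((2*k)‼ : ℝ) := by
    rw [show 2*(k+1) = 2*k+2 from rfl, Nat.doubleFactorial_add_two]; push_cast; ring
  have d1 := dfac_pos k
  have d2 := fac_pos' (2*i)
  have d3 := fac_pos' k
  have d4 := fac_pos' (2*i+k+1)
  rw [hf1, hf2, hf3, hf4, hd]
  push_cast
  field_simp
  ring

lemma idII (n : ℕ) (x : ℝ) :
    hp'' n x - x * hp' n x - (2*(n:ℝ)+2) * hp n x + 2 * gp' n x = 0 := by
  have hx : x * hp' n x = ∑ i ∈ Finset.range (n+1), bcoef n i * (2*(i:ℝ)) * x^(2*i) := by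
    rw [Finset.sum_range_succ' (fun i => bcoef n i * (2*(i:ℝ)) * x^(2*i)) n]
    simp only [Nat.cast_zero, mul_zero, zero_mul, Nat.mul_zero, add_zero, Nat.cast_ofNat]
    unfold hp'
    rw [Finset.mul_sum]
    refine Finset.sum_congr rfl fun i _ => ?_
    push_cast; ring
  have hsum : hp'' n x = ∑ i ∈ Finset.range n,
      ((2*(n:ℝ)+2) * (bcoef n i * x^(2*i)) + bcoef n i * (2*(i:ℝ)) * x^(2*i)
        - 2 * (acoef n i * (2*(i:ℝ)+1) * x^(2*i))) := by
    unfold hp''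
    refine Finset.sum_congr rfl fun i hi => ?_
    rw [show bcoef n (i+1) * (2*(i:ℝ)+2) * (2*(i:ℝ)+1) * x^(2*i)
        = (bcoef n (i+1) * (2*(i:ℝ)+2) * (2*(i:ℝ)+1)) * x^(2*i) by ring,
      key2 n i (Finset.mem_range.mp hi)]
    ring
  rw [hsum, hx, hp_eq]
  unfold gp'
  rw [Finset.sum_range_succ (fun i => bcoef n i * (2*(i:ℝ)) * x^(2*i)) n,
      Finset.sum_range_succ (fun i => bcoef n i * x^(2*i)) n,
      Finset.sum_range_succ (fun i => acoef n i * (2*(i:ℝ)+1) * x^(2*i)) n,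
      an_one, bn_one]
  have hz : (∑ i ∈ Finset.range n,
        ((2*(n:ℝ)+2) * (bcoef n i * x^(2*i)) + bcoef n i * (2*(i:ℝ)) * x^(2*i)
          - 2 * (acoef n i * (2*(i:ℝ)+1) * x^(2*i))))
      - (∑ i ∈ Finset.range n, bcoef n i * (2*(i:ℝ)) * x^(2*i))
      - (2*(n:ℝ)+2) * (∑ i ∈ Finset.range n, bcoef n i * x^(2*i))
      + 2 * (∑ i ∈ Finset.range n, acoef n i * (2*(i:ℝ)+1) * x^(2*i)) = 0 := by
    rw [Finset.mul_sum, Finset.mul_sum, ← Finset.sum_sub_distrib, ← Finset.sum_sub_distrib,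
        ← Finset.sum_add_distrib]
    exact Finset.sum_eq_zero fun i _ => by ring
  linear_combination hz

lemma m_hasDerivAt (n : ℕ) (x : ℝ) :
    HasDerivAt (fun y => hp n y * ff y - gp n y * G y)
      ((hp' n x - x * hp n x + gp n x) * ff x - gp' n x * G x) x := by
  have h := ((hp_hasDerivAt n x).mul (ff_hasDerivAt x)).sub
    ((gp_hasDerivAt n x).mul (G_hasDerivAt x))
  exact h.congr_deriv (by ring)

lemma m1_hasDerivAt (n : ℕ) (x : ℝ) :
    HasDerivAt (fun y => (hp' n y - y * hp n y + gp n y) * ff y - gp' n y * G y)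
      ((hp'' n x - 2*x*hp' n x + (x^2-1)*hp n x + 2*gp' n x - x*gp n x) * ff x
        - gp'' n x * G x) x := by
  have h := ((((hp'_hasDerivAt n x).sub ((hasDerivAt_id x).mul (hp_hasDerivAt n x))).add
      (gp_hasDerivAt n x)).mul (ff_hasDerivAt x)).sub
    ((gp'_hasDerivAt n x).mul (G_hasDerivAt x))
  refine h.congr_deriv ?_
  simp only [id, Pi.add_apply, Pi.sub_apply, Pi.mul_apply]
  ring

theorem stmt2 (n : ℕ) :
    ∀ x : ℝ,
      deriv (deriv (fun y => hp n y * Real.exp (-y^2/2)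
          - gp n y * ∫ t in Set.Ioi y, Real.exp (-t^2/2))) x
      + x * deriv (fun y => hp n y * Real.exp (-y^2/2)
          - gp n y * ∫ t in Set.Ioi y, Real.exp (-t^2/2)) x
      - (2*n+1) * (hp n x * Real.exp (-x^2/2)
          - gp n x * ∫ t in Set.Ioi x, Real.exp (-t^2/2)) = 0 := by
  intro x
  have hfun : (fun y => hp n y * Real.exp (-y^2/2)
      - gp n y * ∫ t in Set.Ioi y, Real.exp (-t^2/2))
      = fun y => hp n y * ff y - gp n y * G y := rfl
  rw [hfun]
  have hd1 : deriv (fun y => hp n y * ff y - gp n y * G y)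
      = fun y => (hp' n y - y * hp n y + gp n y) * ff y - gp' n y * G y :=
    funext fun y => (m_hasDerivAt n y).deriv
  rw [hd1, (m1_hasDerivAt n x).deriv]
  have hI := idI n x
  have hII := idII n x
  have hffx : Real.exp (-x^2/2) = ff x := rfl
  have hGx : (∫ t in Set.Ioi x, Real.exp (-t^2/2)) = G x := rfl
  rw [hffx, hGx]
  push_cast
  linear_combination (ff x) * hII - (G x) * hI
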